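/- Let n and k be integers with 2 ≤ k ≤ n−2. Then there is no real k×n matrix L such that for every subset I ⊆ {1,…,n} with |I| = k the maximal minor det(L_I) equals 1 or −1. (The uniform matroid U_{k,n} has no unimodular realization unless k ≤ 1 or k ≥ n−1.) -/

import Mathlib

/-!
Multiplying `L` on the left by the inverse of one of its maximal submatrices multiplies every maximal
minor by the same unit, so we may assume `L = [1 | N]`. Every entry of `N` is then a maximal minor
(replace one identity column by a column of `N`), hence `±1`. Pivoting at an entry of `N` gives
another matrix of the same kind, and comparing one further entry before and after the pivot writes
`±1` as `±1 · ±1 + ±1`, which forces `3 = 0`.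
-/

open Function Matrix

namespace Function

variable {α β : Type*} [DecidableEq α] {g : α → β} {a : α} {c : β}

lemma Injective.update_of_notMem_range (hg : Injective g) (hc : c ∉ Set.range g) :
    Injective (update g a c) := by
  intro x y h
  by_cases hx : x = a <;> by_cases hy : y = a
  · rw [hx, hy]
  · rw [hx, update_self, update_of_ne hy] at h
    exact absurd ⟨y, h.symm⟩ hc
  · rw [hy, update_self, update_of_ne hx] at h
    exact absurd ⟨x, h⟩ hc
  · rw [update_of_ne hx, update_of_ne hy] at h
    exact hg h

lemma notMem_range_update {c' : β} (hc' : c' ∉ Set.range g) (hne : c' ≠ c) :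
    c' ∉ Set.range (update g a c) := by
  rintro ⟨x, hx⟩
  by_cases hxa : x = a
  · rw [hxa, update_self] at hx
    exact hne hx.symm
  · rw [update_of_ne hxa] at hx
    exact hc' ⟨x, hx⟩

end Function

namespace Matrix

lemma submatrix_update_eq_updateCol {m n R : Type*} [DecidableEq m] (M : Matrix m n R)
    (g : m → n) (i : m) (c : n) :
    M.submatrix id (update g i c) = (M.submatrix id g).updateCol i (fun a => M a c) := by
  ext a j
  by_cases hj : j = i <;> simp [hj]

variable {m n R : Type*} [Fintype m] [DecidableEq m] [CommRing R]

lemma det_one_updateCol (i : m) (v : m → R) : ((1 : Matrix m m R).updateCol i v).det = v i := by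
  rw [← cramer_apply, cramer_one]
  rfl

lemma updateCol_one_mul_apply_of_ne {i a : m} (h : a ≠ i) (v : m → R) (X : Matrix m n R) (b : n) :
    ((1 : Matrix m m R).updateCol i v * X) a b = v a * X i b + X a b := by
  rw [mul_apply, Fintype.sum_eq_add i a h.symm]
  · simp [h]
  · rintro j ⟨hji, hja⟩
    simp [hji, Ne.symm hja]

end Matrix

lemma three_eq_zero_of_eq_mul_add {R : Type*} [CommRing R] {a b c d : R} (ha : a ^ 2 = 1)
    (hb : b ^ 2 = 1) (hc : c ^ 2 = 1) (hd : d ^ 2 = 1) (h : a = b * c + d) : (3 : R) = 0 := by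
  -- squaring `a - d = b * c` gives `2 * a * d = 1`, and squaring that gives `4 = 1`
  linear_combination (2 * a * d + 1 - 4 * d ^ 2) * ha + (2 * a * d - 3) * hd
    - (2 * a * d + 1) * c ^ 2 * hb - (2 * a * d + 1) * hc - (2 * a * d + 1) * (a - d + b * c) * h

/-- Minors are taken along all injective column selections, not only increasing ones; over a domain
`x ^ 2 = 1` means `x = ±1`. -/
def MaximalMinorsSqEqOne {k n R : Type*} [Fintype k] [DecidableEq k] [CommRing R]
    (L : Matrix k n R) : Prop :=
  ∀ g : k → n, Injective g → (L.submatrix id g).det ^ 2 = 1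

namespace MaximalMinorsSqEqOne

variable {k n R : Type*} [Fintype k] [DecidableEq k] [CommRing R] {L M : Matrix k n R}
  {g : k → n}

lemma isUnit_det (hL : MaximalMinorsSqEqOne L) (hg : Injective g) :
    IsUnit (L.submatrix id g).det :=
  (isUnit_pow_iff two_ne_zero).mp (by rw [hL g hg]; exact isUnit_one)

lemma mul_left {B : Matrix k k R} (hB : B.det ^ 2 = 1) (hL : MaximalMinorsSqEqOne L) :
    MaximalMinorsSqEqOne (B * L) := fun g hg => by
  change (B * L.submatrix id g).det ^ 2 = 1
  rw [det_mul, mul_pow, hB, hL g hg, one_mul]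

lemma normalize (hL : MaximalMinorsSqEqOne L) (hg : Injective g) :
    MaximalMinorsSqEqOne ((L.submatrix id g)⁻¹ * L) ∧
      ((L.submatrix id g)⁻¹ * L).submatrix id g = 1 := by
  have hA := hL.isUnit_det hg
  refine ⟨mul_left ?_ hL, nonsing_inv_mul _ hA⟩
  have h := congrArg (· ^ 2) (det_nonsing_inv_mul_det _ hA)
  simpa only [mul_pow, hL g hg, mul_one, one_pow] using h

lemma entry_sq_eq_one (hM : MaximalMinorsSqEqOne M) (hg : Injective g)
    (hMg : M.submatrix id g = 1) (a : k) {c : n} (hc : c ∉ Set.range g) : M a c ^ 2 = 1 := by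
  have h := hM _ (hg.update_of_notMem_range (a := a) hc)
  rwa [submatrix_update_eq_updateCol, hMg, det_one_updateCol] at h

/-- Pivot at `(i₀, c₀)`: with `A` the identity whose column `i₀` is column `c₀` of `M`, the entry
`(i₁, c₁)` of `M = A * (A⁻¹ * M)` is `M i₁ c₀ * (A⁻¹ * M) i₀ c₁ + (A⁻¹ * M) i₁ c₁`, and all four
entries involved lie outside the identity columns of `M` or of `A⁻¹ * M`. -/
theorem three_eq_zero (hM : MaximalMinorsSqEqOne M) (hg : Injective g)
    (hMg : M.submatrix id g = 1) {i₀ i₁ : k} (hi : i₁ ≠ i₀) {c₀ c₁ : n}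
    (hc₀ : c₀ ∉ Set.range g) (hc₁ : c₁ ∉ Set.range g) (hc : c₁ ≠ c₀) : (3 : R) = 0 := by
  have hA : M.submatrix id (update g i₀ c₀) = (1 : Matrix k k R).updateCol i₀ (M · c₀) := by
    rw [submatrix_update_eq_updateCol, hMg]
  set g' := update g i₀ c₀
  have hg' : Injective g' := hg.update_of_notMem_range hc₀
  have hc₁' : c₁ ∉ Set.range g' := notMem_range_update hc₁ hc
  set A := M.submatrix id g'
  obtain ⟨hM', hM'g'⟩ := hM.normalize hg'
  have hpivot : M i₁ c₁ = M i₁ c₀ * (A⁻¹ * M) i₀ c₁ + (A⁻¹ * M) i₁ c₁ := calc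
    M i₁ c₁ = (A * (A⁻¹ * M)) i₁ c₁ := by
      rw [mul_nonsing_inv_cancel_left _ _ (hM.isUnit_det hg')]
    _ = M i₁ c₀ * (A⁻¹ * M) i₀ c₁ + (A⁻¹ * M) i₁ c₁ := by
      rw [hA]
      exact updateCol_one_mul_apply_of_ne hi _ _ _
  exact three_eq_zero_of_eq_mul_add (hM.entry_sq_eq_one hg hMg i₁ hc₁)
    (hM.entry_sq_eq_one hg hMg i₁ hc₀) (hM'.entry_sq_eq_one hg' hM'g' i₀ hc₁')
    (hM'.entry_sq_eq_one hg' hM'g' i₁ hc₁') hpivot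

end MaximalMinorsSqEqOne

theorem not_maximalMinorsSqEqOne {k n : ℕ} {R : Type*} [CommRing R] (h3 : (3 : R) ≠ 0)
    (hk : 2 ≤ k) (hkn : k + 2 ≤ n) (L : Matrix (Fin k) (Fin n) R) :
    ¬ MaximalMinorsSqEqOne L := by
  intro hL
  have hg : Injective (Fin.castLE (by omega : k ≤ n)) := Fin.castLE_injective _
  have hout : ∀ c : Fin n, k ≤ c → c ∉ Set.range (Fin.castLE (by omega : k ≤ n)) := by
    rintro c hc ⟨j, rfl⟩
    exact absurd hc (by simp)
  obtain ⟨hM, hMg⟩ := hL.normalize hg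
  exact h3 (hM.three_eq_zero hg hMg (i₀ := ⟨0, by omega⟩) (i₁ := ⟨1, by omega⟩)
    (by simp [Fin.ext_iff]) (hout ⟨k, by omega⟩ le_rfl) (hout ⟨k + 1, by omega⟩ (by simp))
    (by simp [Fin.ext_iff]))

lemma maximalMinorsSqEqOne_of_orderIsoOfFin {k n : ℕ} {R : Type*} [CommRing R]
    {L : Matrix (Fin k) (Fin n) R}
    (hL : ∀ (I : Finset (Fin n)) (hI : I.card = k),
      (L.submatrix id fun j => (I.orderIsoOfFin hI j : Fin n)).det ^ 2 = 1) :
    MaximalMinorsSqEqOne L := by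
  classical
  intro g hg
  set I := Finset.univ.image g
  have hI : I.card = k := by simp [I, Finset.card_image_of_injective _ hg]
  set e := I.orderIsoOfFin hI
  have hmem : ∀ j, g j ∈ I := fun j => Finset.mem_image_of_mem g (Finset.mem_univ j)
  let σ : Equiv.Perm (Fin k) := Equiv.ofBijective (fun j => e.symm ⟨g j, hmem j⟩)
    (Finite.injective_iff_bijective.mp fun a b h => hg (by simpa using h))
  have hσ : L.submatrix id g = (L.submatrix id fun j => (e j : Fin n)).submatrix id σ := by
    ext a b
    simp [σ]
  rw [hσ, det_permute', mul_pow, hL I hI, mul_one]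
  rcases Int.units_eq_one_or σ.sign with h | h <;> simp [h]

theorem stmt9 {n k : ℕ} (hk : 2 ≤ k) (hkn : k ≤ n - 2) :
    ¬ ∃ L : Matrix (Fin k) (Fin n) ℝ,
        ∀ (I : Finset (Fin n)) (hI : I.card = k),
          (L.submatrix id (fun j => ((I.orderIsoOfFin hI j : Fin n)))).det = 1 ∨
          (L.submatrix id (fun j => ((I.orderIsoOfFin hI j : Fin n)))).det = -1 := by
  rintro ⟨L, hL⟩
  refine not_maximalMinorsSqEqOne (R := ℝ) (by norm_num) hk (by omega) L ?_
  exact maximalMinorsSqEqOne_of_orderIsoOfFin fun I hI => sq_eq_one_iff.mpr (hL I hI)
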